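/- Third derivative of the Cauchy integral operator at the identity (evaluation D³𝒞(w)[conj(w)^{m−1}, conj(w)^{m−1}, conj(w)^{m−1}](conj(w)) = 0). Let w ∈ ℂ with |w| = 1 and let m ∈ ℕ with m ≥ 2. Then −((6(m−1))/(2πi)) ∮_{|τ|=1} ((conj(τ) − conj(w))(conj(τ)^{m−1} − conj(w)^{m−1})²/((τ − w)³·τ^m)) dτ − (6/(2πi)) ∮_{|τ|=1} ((conj(τ) − conj(w))(conj(τ)^{m−1} − conj(w)^{m−1})³/(τ − w)⁴) dτ = 0. -/

import Mathlib

open ComplexConjugate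

noncomputable section

open Metric Real MeasureTheory Finset

/-- Congruence for circle integrals off a single point. -/
lemma circleIntegral_congr_ne {f g : ℂ → ℂ} {c w : ℂ} {R : ℝ} (hR : R ≠ 0)
    (h : ∀ z ∈ sphere c |R|, z ≠ w → f z = g z) :
    (∮ z in C(c, R), f z) = ∮ z in C(c, R), g z := by
  have hcnt : (circleMap c R ⁻¹' {w}).Countable :=
    (Set.countable_singleton _).preimage_circleMap c hR
  refine intervalIntegral.integral_congr_ae ((hcnt.ae_notMem _).mono fun θ hθ _ => ?_)
  have hne : circleMap c R θ ≠ w := hθ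
  simp only [h _ (circleMap_mem_sphere' c R θ) hne]

/-- A circle integral of a finite sum is the sum of the circle integrals. -/
lemma circleIntegral_finset_sum {ι : Type*} (s : Finset ι) (f : ι → ℂ → ℂ) (c : ℂ) (R : ℝ)
    (h : ∀ i ∈ s, CircleIntegrable (f i) c R) :
    (∮ z in C(c, R), ∑ i ∈ s, f i z) = ∑ i ∈ s, ∮ z in C(c, R), f i z := by
  simp only [circleIntegral, Finset.smul_sum]
  rw [intervalIntegral.integral_finset_sum]
  intro i hi
  exact (h i hi).out

/-- A finite sum of negative-power monomials of exponent at least `2` integrates to `0`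
over the unit circle. -/
lemma circleIntegral_sum_inv_pow {ι : Type*} (s : Finset ι) (c : ι → ℂ) (k : ι → ℕ)
    (hk : ∀ i ∈ s, 2 ≤ k i) :
    (∮ τ in C(0, 1), ∑ i ∈ s, c i * (τ⁻¹) ^ (k i)) = 0 := by
  have hne : ∀ x : ℂ, x ∈ sphere (0 : ℂ) 1 → x ≠ 0 := by
    intro x hx h
    rw [h] at hx
    simp at hx
  have hint : ∀ i ∈ s, CircleIntegrable (fun τ : ℂ => c i * (τ⁻¹) ^ (k i)) 0 1 := by
    intro i _
    refine ContinuousOn.circleIntegrable zero_le_one ?_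
    exact continuousOn_const.mul ((continuousOn_id.inv₀ hne).pow _)
  rw [circleIntegral_finset_sum s _ 0 1 hint]
  refine Finset.sum_eq_zero fun i hi => ?_
  have hfun : (fun τ : ℂ => c i * (τ⁻¹) ^ (k i)) = fun τ => c i * (τ - 0) ^ (-(k i : ℤ)) := by
    funext τ
    rw [sub_zero, zpow_neg, zpow_natCast, inv_pow]
  rw [show (∮ τ in C(0, 1), c i * (τ⁻¹) ^ (k i)) =
      ∮ τ in C(0, 1), c i * (τ - 0) ^ (-(k i : ℤ)) from by rw [hfun],
    circleIntegral.integral_const_mul, circleIntegral.integral_sub_zpow_of_ne, mul_zero]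
  have := hk i hi
  omega

/-- The constant `2πi`. -/
def twoPiI : ℂ := ((2 * Real.pi : ℝ) : ℂ) * Complex.I

/-- **Third derivative of the Cauchy integral operator at the identity**:
the evaluation `D³𝒞(w)[conj(w)^{m−1}, conj(w)^{m−1}, conj(w)^{m−1}](conj w) = 0`. -/
theorem cauchy_operator_third_derivative_evaluation (w : ℂ) (hw : ‖w‖ = 1)
    (m : ℕ) (hm : 2 ≤ m) :
    -((6 * ((m : ℂ) - 1)) / twoPiI) *
        (∮ τ in C(0, 1),
          (conj τ - conj w) * (conj τ ^ (m - 1) - conj w ^ (m - 1)) ^ 2 /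
            ((τ - w) ^ 3 * τ ^ m)) -
      (6 / twoPiI) *
        (∮ τ in C(0, 1),
          (conj τ - conj w) * (conj τ ^ (m - 1) - conj w ^ (m - 1)) ^ 3 / (τ - w) ^ 4) =
      0 := by
  have hw0 : w ≠ 0 := by
    intro h; rw [h] at hw; simp at hw
  have hwinv : w⁻¹ = conj w := Complex.inv_eq_conj hw
  -- the first integral vanishes
  have h1 : (∮ τ in C(0, 1),
      (conj τ - conj w) * (conj τ ^ (m - 1) - conj w ^ (m - 1)) ^ 2 /
        ((τ - w) ^ 3 * τ ^ m)) = 0 := by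
    rw [circleIntegral_congr_ne (g := fun τ =>
        ∑ p ∈ Finset.range (m - 1) ×ˢ Finset.range (m - 1),
          (-(w⁻¹ ^ 3 * (w⁻¹ ^ (m - 1 - 1 - p.1) * w⁻¹ ^ (m - 1 - 1 - p.2)))) *
            (τ⁻¹) ^ (3 + m + p.1 + p.2)) one_ne_zero]
    · exact circleIntegral_sum_inv_pow _ _ _ (fun p _ => by omega)
    · intro τ hτ hτw
      have hτ1 : ‖τ‖ = 1 := by simpa using hτ
      have hτ0 : τ ≠ 0 := by intro h; rw [h] at hτ1; simp at hτ1
      have hτinv : τ⁻¹ = conj τ := Complex.inv_eq_conj hτ1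
      have hsub : τ - w ≠ 0 := sub_ne_zero.2 hτw
      have hgeom : conj τ ^ (m - 1) - conj w ^ (m - 1) =
          (∑ i ∈ Finset.range (m - 1), conj τ ^ i * conj w ^ (m - 1 - 1 - i)) *
            (conj τ - conj w) := (geom_sum₂_mul _ _ _).symm
      rw [hgeom, ← hτinv, ← hwinv]
      have hdiff : τ⁻¹ - w⁻¹ = -(τ - w) * (τ⁻¹ * w⁻¹) := by
        field_simp
        ring
      rw [hdiff, Finset.sum_product]
      set S : ℂ := ∑ i ∈ Finset.range (m - 1), τ⁻¹ ^ i * w⁻¹ ^ (m - 1 - 1 - i) with hS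
      have key : -(τ - w) * (τ⁻¹ * w⁻¹) * (S * (-(τ - w) * (τ⁻¹ * w⁻¹))) ^ 2 /
          ((τ - w) ^ 3 * τ ^ m) = -(w⁻¹ ^ 3 * (τ⁻¹ ^ 3 * τ⁻¹ ^ m)) * S ^ 2 := by
        rw [div_eq_iff (mul_ne_zero (pow_ne_zero _ hsub) (pow_ne_zero _ hτ0))]
        have h1 : τ⁻¹ ^ m * τ ^ m = 1 := by
          rw [← mul_pow, inv_mul_cancel₀ hτ0, one_pow]
        have h2 : τ⁻¹ * τ = 1 := inv_mul_cancel₀ hτ0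
        linear_combination (w⁻¹ ^ 3 * τ⁻¹ ^ 3 * S ^ 2 * (τ - w) ^ 3) * h1
      rw [key, hS, pow_two, Finset.sum_mul_sum]
      simp only [Finset.mul_sum]
      refine Finset.sum_congr rfl fun i _ => Finset.sum_congr rfl fun j _ => ?_
      ring
  -- the second integral vanishes
  have h2 : (∮ τ in C(0, 1),
      (conj τ - conj w) * (conj τ ^ (m - 1) - conj w ^ (m - 1)) ^ 3 / (τ - w) ^ 4) = 0 := by
    rw [circleIntegral_congr_ne (g := fun τ =>
        ∑ p ∈ (Finset.range (m - 1) ×ˢ Finset.range (m - 1)) ×ˢ Finset.range (m - 1),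
          (w⁻¹ ^ 4 * (w⁻¹ ^ (m - 1 - 1 - p.1.1) * w⁻¹ ^ (m - 1 - 1 - p.1.2) *
            w⁻¹ ^ (m - 1 - 1 - p.2))) * (τ⁻¹) ^ (4 + p.1.1 + p.1.2 + p.2)) one_ne_zero]
    · exact circleIntegral_sum_inv_pow _ _ _ (fun p _ => by omega)
    · intro τ hτ hτw
      have hτ1 : ‖τ‖ = 1 := by simpa using hτ
      have hτ0 : τ ≠ 0 := by intro h; rw [h] at hτ1; simp at hτ1
      have hτinv : τ⁻¹ = conj τ := Complex.inv_eq_conj hτ1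
      have hsub : τ - w ≠ 0 := sub_ne_zero.2 hτw
      have hgeom : conj τ ^ (m - 1) - conj w ^ (m - 1) =
          (∑ i ∈ Finset.range (m - 1), conj τ ^ i * conj w ^ (m - 1 - 1 - i)) *
            (conj τ - conj w) := (geom_sum₂_mul _ _ _).symm
      rw [hgeom, ← hτinv, ← hwinv]
      have hdiff : τ⁻¹ - w⁻¹ = -(τ - w) * (τ⁻¹ * w⁻¹) := by
        field_simp
        ring
      rw [hdiff, Finset.sum_product]
      set S : ℂ := ∑ i ∈ Finset.range (m - 1), τ⁻¹ ^ i * w⁻¹ ^ (m - 1 - 1 - i) with hS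
      have key : -(τ - w) * (τ⁻¹ * w⁻¹) * (S * (-(τ - w) * (τ⁻¹ * w⁻¹))) ^ 3 /
          (τ - w) ^ 4 = (w⁻¹ ^ 4 * τ⁻¹ ^ 4) * S ^ 3 := by
        rw [div_eq_iff (pow_ne_zero _ hsub)]
        ring
      have hS3 : S ^ 3 = ∑ i ∈ Finset.range (m - 1), ∑ j ∈ Finset.range (m - 1),
          ∑ k ∈ Finset.range (m - 1),
            (τ⁻¹ ^ i * w⁻¹ ^ (m - 1 - 1 - i)) * ((τ⁻¹ ^ j * w⁻¹ ^ (m - 1 - 1 - j)) *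
              (τ⁻¹ ^ k * w⁻¹ ^ (m - 1 - 1 - k))) := by
        calc S ^ 3 = S * (S * S) := by ring
          _ = ∑ i ∈ Finset.range (m - 1), (τ⁻¹ ^ i * w⁻¹ ^ (m - 1 - 1 - i)) * (S * S) :=
            Finset.sum_mul _ _ _
          _ = _ := by
            refine Finset.sum_congr rfl fun i _ => ?_
            rw [Finset.sum_mul_sum, Finset.mul_sum]
            exact Finset.sum_congr rfl fun j _ => Finset.mul_sum _ _ _
      rw [key, hS3]
      simp only [Finset.mul_sum, Finset.sum_product]
      refine Finset.sum_congr rfl fun i _ => Finset.sum_congr rfl fun j _ =>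
        Finset.sum_congr rfl fun k _ => ?_
      ring
  rw [h1, h2]; ring
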